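/- Let L = E₈ ⊥ E₈ ⊆ ℝ^{16} be the orthogonal sum of two copies of the E₈ root lattice, with root system R = L(2) of cardinality 480. Then the quadratic form Q[H] = ∑_{x∈R}(xᵀHx)² on 16×16 symmetric matrices has eigenvalue 0 with multiplicity at least 64: Q vanishes on the 64-dimensional space of symmetric matrices whose two diagonal 8×8 blocks are zero. -/

import Mathlib

open Matrix
open scoped BigOperators

/-- The `E₈` lattice in its even coordinate system: all coordinates integers or all
coordinates half-odd-integers, with even coordinate sum. -/
def E8Lattice : Set (Fin 8 → ℝ) :=
  {x | ((∀ i, ∃ k : ℤ, x i = k) ∨ (∀ i, ∃ k : ℤ, x i = k + 1 / 2)) ∧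
        ∃ k : ℤ, ∑ i, x i = 2 * k}

/-- The shell of squared norm `2` of `L = E₈ ⊥ E₈ ⊆ ℝ^{16}`, i.e. its root system. -/
def E8perpE8Roots : Set ((Fin 8 ⊕ Fin 8) → ℝ) :=
  {x | (fun i => x (Sum.inl i)) ∈ E8Lattice ∧ (fun i => x (Sum.inr i)) ∈ E8Lattice ∧
        ∑ i, x i ^ 2 = 2}

/-- The space of symmetric `16 × 16` matrices whose two diagonal `8 × 8` blocks vanish. -/
def offDiagonalBlockSymmetric : Submodule ℝ (Matrix (Fin 8 ⊕ Fin 8) (Fin 8 ⊕ Fin 8) ℝ) where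
  carrier := {H | Hᵀ = H ∧ (∀ i j : Fin 8, H (Sum.inl i) (Sum.inl j) = 0) ∧
    ∀ i j : Fin 8, H (Sum.inr i) (Sum.inr j) = 0}
  add_mem' := by
    rintro a b ⟨ha1, ha2, ha3⟩ ⟨hb1, hb2, hb3⟩
    exact ⟨by rw [Matrix.transpose_add, ha1, hb1],
      fun i j => by simp [Matrix.add_apply, ha2 i j, hb2 i j],
      fun i j => by simp [Matrix.add_apply, ha3 i j, hb3 i j]⟩
  zero_mem' := ⟨Matrix.transpose_zero, fun i j => rfl, fun i j => rfl⟩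
  smul_mem' := by
    rintro c a ⟨h1, h2, h3⟩
    exact ⟨by rw [Matrix.transpose_smul, h1],
      fun i j => by simp [Matrix.smul_apply, h2 i j],
      fun i j => by simp [Matrix.smul_apply, h3 i j]⟩

/-!
Nonzero vectors of `E₈` have squared norm at least `2`, so a vector of `E₈ ⊥ E₈` of squared norm
`2` lies in one of the two summands. For such a vector `x`, `xᵀ H x` only involves a diagonal
block of `H`, which vanishes on `offDiagonalBlockSymmetric`; that space is isomorphic to the
`8 × 8` matrices through its upper right block. The `240` roots of `E₈` are the `112` integral
vectors `±eᵢ ± eⱼ` and the `128` vectors `(±½, …, ±½)` with an even number of minus signs.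
-/

open Finset

lemma even_sum_sq_iff {ι : Type*} (s : Finset ι) (k : ι → ℤ) :
    Even (∑ i ∈ s, k i ^ 2) ↔ Even (∑ i ∈ s, k i) := by
  have hsplit : ∑ i ∈ s, k i ^ 2 = ∑ i ∈ s, k i * (k i - 1) + ∑ i ∈ s, k i := by
    rw [← sum_add_distrib]; exact sum_congr rfl fun i _ => by ring
  have hpronic : Even (∑ i ∈ s, k i * (k i - 1)) :=
    even_sum _ fun i _ => Int.even_mul_pred_self (k i)
  rw [hsplit, Int.even_add]
  exact iff_true_left hpronic

lemma quarter_le_sq_intCast_add_half (k : ℤ) : (1 / 4 : ℝ) ≤ ((k : ℝ) + 1 / 2) ^ 2 := by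
  have : (0 : ℤ) ≤ k * (k + 1) := by rcases le_or_gt 0 k with h | h <;> nlinarith
  have : (0 : ℝ) ≤ k * (k + 1) := by exact_mod_cast this
  nlinarith

lemma sq_intCast_add_half_eq_quarter_iff (k : ℤ) :
    ((k : ℝ) + 1 / 2) ^ 2 = 1 / 4 ↔ k = 0 ∨ k = -1 := by
  have h : ((k : ℝ) + 1 / 2) ^ 2 = 1 / 4 ↔ ((k * (k + 1) : ℤ) : ℝ) = 0 := by
    push_cast; constructor <;> intro h <;> linarith
  rw [h, Int.cast_eq_zero, mul_eq_zero, add_eq_zero_iff_eq_neg]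

lemma intCast_mem_E8Lattice_iff (k : Fin 8 → ℤ) :
    (fun i => (k i : ℝ)) ∈ E8Lattice ↔ Even (∑ i, k i) := by
  simp only [E8Lattice, Set.mem_ofPred_eq, ← Int.cast_sum, even_iff_exists_two_mul]
  constructor
  · rintro ⟨-, m, hm⟩
    exact ⟨m, by exact_mod_cast hm⟩
  · rintro ⟨m, hm⟩
    exact ⟨Or.inl fun i => ⟨k i, rfl⟩, m, by exact_mod_cast hm⟩

lemma E8Lattice.two_le_sum_sq {x : Fin 8 → ℝ} (hx : x ∈ E8Lattice) (hx0 : x ≠ 0) :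
    2 ≤ ∑ i, x i ^ 2 := by
  rcases hx.1 with hint | hhalf
  · choose k hk using hint
    obtain rfl : x = fun i => (k i : ℝ) := funext hk
    have heven : Even (∑ i, k i ^ 2) :=
      (even_sum_sq_iff _ k).2 ((intCast_mem_E8Lattice_iff k).1 hx)
    obtain ⟨i, hi⟩ : ∃ i, k i ≠ 0 := by
      by_contra! h
      exact hx0 (funext fun i => by simp [h i])
    have hpos : 0 < ∑ i, k i ^ 2 :=
      lt_of_lt_of_le (by positivity) (single_le_sum (fun j _ => sq_nonneg (k j)) (mem_univ i))
    have : 2 ≤ ∑ i, k i ^ 2 := by obtain ⟨m, hm⟩ := heven; omega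
    show (2 : ℝ) ≤ ∑ i, (k i : ℝ) ^ 2
    exact_mod_cast this
  · choose k hk using hhalf
    calc (2 : ℝ) = ∑ _i : Fin 8, 1 / 4 := by norm_num
      _ ≤ ∑ i, x i ^ 2 := sum_le_sum fun i _ => hk i ▸ quarter_le_sq_intCast_add_half (k i)

def E8Roots : Set (Fin 8 → ℝ) := {x | x ∈ E8Lattice ∧ ∑ i, x i ^ 2 = 2}

noncomputable def integerRoots : Finset (Fin 8 → ℤ) :=
  (Icc (-1) 1).filter fun w => ∑ i, w i ^ 2 = 2

lemma card_integerRoots : integerRoots.card = 112 := by decide +kernel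

lemma mem_integerRoots {w : Fin 8 → ℤ} : w ∈ integerRoots ↔ ∑ i, w i ^ 2 = 2 := by
  refine ⟨fun h => (mem_filter.1 h).2,
    fun h => mem_filter.2 ⟨mem_Icc.2 ⟨fun i => ?_, fun i => ?_⟩, h⟩⟩
  all_goals
    have : w i ^ 2 ≤ 2 := h ▸ single_le_sum (fun j _ => sq_nonneg (w j)) (mem_univ i)
    simp only [Pi.neg_apply, Pi.one_apply]
    nlinarith

lemma intCast_mem_E8Roots_iff (w : Fin 8 → ℤ) :
    (fun i => (w i : ℝ)) ∈ E8Roots ↔ w ∈ integerRoots := by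
  have hnorm : ∑ i, (w i : ℝ) ^ 2 = 2 ↔ ∑ i, w i ^ 2 = 2 := by exact_mod_cast Iff.rfl
  rw [E8Roots, Set.mem_ofPred_eq, intCast_mem_E8Lattice_iff, hnorm, mem_integerRoots,
    ← even_sum_sq_iff]
  exact and_iff_right_of_imp fun h => h ▸ even_two

noncomputable def halfVector (s : Finset (Fin 8)) : Fin 8 → ℝ :=
  fun i => if i ∈ s then -1 / 2 else 1 / 2

def evenSubsets : Finset (Finset (Fin 8)) := univ.filter fun s => Even s.card

lemma card_evenSubsets : evenSubsets.card = 128 := by decide +kernel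

lemma mem_iff_halfVector_neg (s : Finset (Fin 8)) (i : Fin 8) : i ∈ s ↔ halfVector s i < 0 := by
  unfold halfVector; split_ifs <;> norm_num [*]

lemma halfVector_injective : Function.Injective halfVector := fun s t h => by
  ext i
  rw [mem_iff_halfVector_neg, mem_iff_halfVector_neg t, h]

lemma sum_halfVector (s : Finset (Fin 8)) : ∑ i, halfVector s i = 4 - s.card := by
  have : ∀ i, halfVector s i = 1 / 2 - if i ∈ s then 1 else 0 := fun i => by
    unfold halfVector; split_ifs <;> norm_num
  norm_num [this, sum_sub_distrib, sum_boole]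

lemma sum_sq_halfVector (s : Finset (Fin 8)) : ∑ i, halfVector s i ^ 2 = 2 := by
  simp only [halfVector, apply_ite (· ^ 2)]
  norm_num

lemma halfVector_mem_E8Lattice_iff (s : Finset (Fin 8)) :
    halfVector s ∈ E8Lattice ↔ Even s.card := by
  have hhalf : ∀ i, ∃ k : ℤ, halfVector s i = k + 1 / 2 := fun i =>
    ⟨if i ∈ s then -1 else 0, by unfold halfVector; split_ifs <;> norm_num⟩
  have hsum : (4 - (s.card : ℝ)) = ((4 - s.card : ℤ) : ℝ) := by push_cast; ring
  have htwo : ∀ m : ℤ, (2 : ℝ) * m = ((2 * m : ℤ) : ℝ) := fun m => by push_cast; rfl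
  rw [E8Lattice, Set.mem_ofPred_eq, and_iff_right (Or.inr hhalf), sum_halfVector]
  simp only [hsum, htwo, Int.cast_inj, ← even_iff_exists_two_mul, Int.even_sub, Int.even_coe_nat]
  exact iff_true_left ⟨2, rfl⟩

lemma halfVector_mem_E8Roots_iff (s : Finset (Fin 8)) :
    halfVector s ∈ E8Roots ↔ s ∈ evenSubsets := by
  simp [E8Roots, halfVector_mem_E8Lattice_iff, sum_sq_halfVector, evenSubsets]

lemma eq_halfVector_of_sum_sq_eq_two {x : Fin 8 → ℝ} {k : Fin 8 → ℤ}
    (hk : ∀ i, x i = k i + 1 / 2) (hx : ∑ i, x i ^ 2 = 2) :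
    x = halfVector (univ.filter fun i => k i = -1) := by
  have hquarter : ∀ i ∈ univ, 1 / 4 = x i ^ 2 :=
    (sum_eq_sum_iff_of_le fun i _ => hk i ▸ quarter_le_sq_intCast_add_half (k i)).1
      (by rw [hx]; norm_num)
  funext i
  rcases (sq_intCast_add_half_eq_quarter_iff (k i)).1 (hk i ▸ (hquarter i (mem_univ i)).symm)
    with h | h <;> norm_num [halfVector, hk i, h]

lemma intCast_ne_halfVector (w : Fin 8 → ℤ) (s : Finset (Fin 8)) :
    (fun i => (w i : ℝ)) ≠ halfVector s := by
  intro h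
  have h0 : ((2 * w 0 : ℤ) : ℝ) = 2 * halfVector s 0 := by push_cast; rw [← h]
  unfold halfVector at h0
  split_ifs at h0 <;> norm_num at h0 <;> norm_cast at h0 <;> omega

lemma E8Roots_eq :
    E8Roots =
      (fun (w : Fin 8 → ℤ) i => (w i : ℝ)) '' integerRoots ∪ halfVector '' evenSubsets := by
  ext x
  constructor
  · intro hx
    rcases hx.1.1 with hint | hhalf
    · choose k hk using hint
      obtain rfl : x = fun i => (k i : ℝ) := funext hk
      exact Or.inl ⟨k, (intCast_mem_E8Roots_iff k).1 hx, rfl⟩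
    · choose k hk using hhalf
      obtain rfl := eq_halfVector_of_sum_sq_eq_two hk hx.2
      exact Or.inr ⟨_, (halfVector_mem_E8Roots_iff _).1 hx, rfl⟩
  · rintro (⟨w, hw, rfl⟩ | ⟨s, hs, rfl⟩)
    exacts [(intCast_mem_E8Roots_iff w).2 hw, (halfVector_mem_E8Roots_iff s).2 hs]

lemma ncard_E8Roots : E8Roots.ncard = 240 := by
  have hcast : Function.Injective fun (w : Fin 8 → ℤ) i => (w i : ℝ) :=
    fun v w h => funext fun i => Int.cast_injective (congrFun h i)
  have hdisj : Disjoint ((fun (w : Fin 8 → ℤ) i => (w i : ℝ)) '' integerRoots)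
      (halfVector '' evenSubsets) := by
    rw [Set.disjoint_left]
    rintro _ ⟨w, -, rfl⟩ ⟨s, -, hs⟩
    exact intCast_ne_halfVector w s hs.symm
  rw [E8Roots_eq, Set.ncard_union_eq hdisj, Set.ncard_image_of_injective _ hcast,
    Set.ncard_image_of_injective _ halfVector_injective, Set.ncard_coe_finset,
    Set.ncard_coe_finset, card_integerRoots, card_evenSubsets]

lemma zero_mem_E8Lattice : (0 : Fin 8 → ℝ) ∈ E8Lattice :=
  ⟨Or.inl fun _ => ⟨0, by simp⟩, 0, by simp⟩

lemma sumElim_mem_E8perpE8Roots_iff (a b : Fin 8 → ℝ) :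
    Sum.elim a b ∈ E8perpE8Roots ↔ (a ∈ E8Roots ∧ b = 0) ∨ (a = 0 ∧ b ∈ E8Roots) := by
  simp only [E8perpE8Roots, E8Roots, Set.mem_ofPred_eq, Fintype.sum_sum_type, Sum.elim_inl,
    Sum.elim_inr]
  constructor
  · rintro ⟨ha, hb, hnorm⟩
    by_cases ha0 : a = 0
    · subst ha0
      exact Or.inr ⟨rfl, hb, by simpa using hnorm⟩
    · have h2a := E8Lattice.two_le_sum_sq ha ha0
      obtain rfl : b = 0 := by
        by_contra hb0
        linarith [E8Lattice.two_le_sum_sq hb hb0]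
      exact Or.inl ⟨⟨ha, by simpa using hnorm⟩, rfl⟩
  · rintro (⟨⟨ha, hna⟩, rfl⟩ | ⟨rfl, hb, hnb⟩)
    · exact ⟨ha, zero_mem_E8Lattice, by simpa using hna⟩
    · exact ⟨zero_mem_E8Lattice, hb, by simpa using hnb⟩

lemma E8perpE8Roots_eq :
    E8perpE8Roots =
      (Sum.elim · (0 : Fin 8 → ℝ)) '' E8Roots ∪ Sum.elim (0 : Fin 8 → ℝ) '' E8Roots := by
  ext x
  obtain ⟨a, b, rfl⟩ : ∃ a b, x = Sum.elim a b := ⟨_, _, (Sum.elim_comp_inl_inr x).symm⟩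
  rw [sumElim_mem_E8perpE8Roots_iff]
  simp only [Set.mem_union, Set.mem_image, Sum.elim_eq_iff]
  aesop

lemma ncard_E8perpE8Roots : E8perpE8Roots.ncard = 480 := by
  have hdisj : Disjoint ((Sum.elim · (0 : Fin 8 → ℝ)) '' E8Roots)
      (Sum.elim (0 : Fin 8 → ℝ) '' E8Roots) := by
    rw [Set.disjoint_left]
    rintro _ ⟨a, ha, rfl⟩ ⟨b, -, hb⟩
    obtain ⟨rfl, -⟩ := Sum.elim_eq_iff.1 hb
    simpa [E8Roots] using ha.2
  have hfin : E8Roots.Finite := Set.finite_of_ncard_ne_zero (by rw [ncard_E8Roots]; norm_num)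
  rw [E8perpE8Roots_eq, Set.ncard_union_eq hdisj (hfin.image _) (hfin.image _),
    Set.ncard_image_of_injective _ fun _ _ h => (Sum.elim_eq_iff.1 h).1,
    Set.ncard_image_of_injective _ fun _ _ h => (Sum.elim_eq_iff.1 h).2, ncard_E8Roots]

namespace Matrix

variable {m n α : Type*} [Fintype m] [Fintype n] [NonUnitalNonAssocSemiring α]

lemma sumElim_zero_dotProduct_mulVec (H : Matrix (m ⊕ n) (m ⊕ n) α) (a : m → α) :
    Sum.elim a 0 ⬝ᵥ (H *ᵥ Sum.elim a 0) = a ⬝ᵥ (H.toBlocks₁₁ *ᵥ a) := by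
  conv_lhs => rw [← fromBlocks_toBlocks H]
  simp [fromBlocks_mulVec, sumElim_dotProduct_sumElim]

lemma zero_sumElim_dotProduct_mulVec (H : Matrix (m ⊕ n) (m ⊕ n) α) (b : n → α) :
    Sum.elim 0 b ⬝ᵥ (H *ᵥ Sum.elim 0 b) = b ⬝ᵥ (H.toBlocks₂₂ *ᵥ b) := by
  conv_lhs => rw [← fromBlocks_toBlocks H]
  simp [fromBlocks_mulVec, sumElim_dotProduct_sumElim]

end Matrix

lemma dotProduct_mulVec_eq_zero_of_mem_E8perpE8Roots
    {H : Matrix (Fin 8 ⊕ Fin 8) (Fin 8 ⊕ Fin 8) ℝ} (hH : H ∈ offDiagonalBlockSymmetric)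
    {x : Fin 8 ⊕ Fin 8 → ℝ} (hx : x ∈ E8perpE8Roots) :
    x ⬝ᵥ (H *ᵥ x) = 0 := by
  obtain ⟨-, h₁₁, h₂₂⟩ := hH
  rw [E8perpE8Roots_eq] at hx
  rcases hx with ⟨a, -, rfl⟩ | ⟨b, -, rfl⟩
  · rw [sumElim_zero_dotProduct_mulVec, show H.toBlocks₁₁ = 0 from ext h₁₁, zero_mulVec,
      dotProduct_zero]
  · rw [zero_sumElim_dotProduct_mulVec, show H.toBlocks₂₂ = 0 from ext h₂₂, zero_mulVec,
      dotProduct_zero]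

noncomputable def offDiagonalBlockSymmetricEquiv :
    offDiagonalBlockSymmetric ≃ₗ[ℝ] Matrix (Fin 8) (Fin 8) ℝ where
  toFun H := H.1.toBlocks₁₂
  map_add' _ _ := rfl
  map_smul' _ _ := rfl
  invFun C :=
    ⟨fromBlocks 0 C Cᵀ 0, by simp [fromBlocks_transpose], fun _ _ => rfl, fun _ _ => rfl⟩
  left_inv := by
    rintro ⟨H, hsym, h₁₁, h₂₂⟩
    ext (i | i) (j | j)
    · exact (h₁₁ i j).symm
    · rfl
    · exact congrFun (congrFun hsym (Sum.inr i)) (Sum.inl j)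
    · exact (h₂₂ i j).symm
  right_inv _ := rfl

lemma finrank_offDiagonalBlockSymmetric : Module.finrank ℝ offDiagonalBlockSymmetric = 64 := by
  simp [offDiagonalBlockSymmetricEquiv.finrank_eq, Module.finrank_matrix]

theorem E8perpE8_zero_eigenvalue :
    Set.ncard E8perpE8Roots = 480 ∧
      Module.finrank ℝ offDiagonalBlockSymmetric = 64 ∧
      ∀ H ∈ offDiagonalBlockSymmetric, ∑ᶠ x ∈ E8perpE8Roots, (x ⬝ᵥ (H *ᵥ x)) ^ 2 = 0 :=
  ⟨ncard_E8perpE8Roots, finrank_offDiagonalBlockSymmetric, fun _ hH =>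
    finsum_mem_eq_zero_of_forall_eq_zero fun _ hx => by
      rw [dotProduct_mulVec_eq_zero_of_mem_E8perpE8Roots hH hx, sq, zero_mul]⟩
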